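/- Consider the Gaussian bi-factor model Z_{jg} = α_{jg,0} W₀ + α_{jg} W_g + ψ_{jg} ε_{jg}, j = 1,…,d_g, g = 1,…,G (G fixed), with W₀, W₁,…,W_G, (ε_{jg}) mutually independent N(0,1), loadings uniformly bounded away from ±1, ψ_{jg}² = 1 − α_{jg,0}² − α_{jg}² bounded away from 0, and loading matrices A_D = [a₀, diag(a₁,…,a_G)] of full column rank with condition numbers bounded as all d_g → ∞, no group size dominating, and d_g⁻¹ ‖a_j‖₁ not tending to 0 for j ∈ {0,1,…,G}; assume D⁻¹ A_Dᵀ Ψ_D⁻² A_D → Q with Q symmetric positive definite. Let w̃ = (w̃₀, w̃₁,…,w̃_G) = (I_{G+1} + A_Dᵀ Ψ_D⁻² A_D)⁻¹ A_Dᵀ Ψ_D⁻² Z_D be the vector of regression factor scores. Then w̃_g − W_g = O_p(D^{−1/2}) for every g ∈ {0,1,…,G}. -/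

import Mathlib

/-!
STATEMENT 9: Gaussian bi-factor model `Z_{jg} = α_{jg,0} W₀ + α_{jg} W_g + ψ_{jg} ε_{jg}`
with `W₀, W₁, …, W_G, (ε_{jg})` mutually independent `N(0,1)`, loadings uniformly bounded
away from `±1`, `ψ_{jg}² = 1 − α_{jg,0}² − α_{jg}²` bounded away from `0`, structured
loading matrices `A_D = [a₀, diag(a₁,…,a_G)]` of full column rank, no group size
dominating, `d_g⁻¹ ‖a_j‖₁ ↛ 0`, and `D⁻¹ A_Dᵀ Ψ_D⁻² A_D → Q` symmetric positive
definite.  Then the regression factor scores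
`w̃ = (I_{G+1} + A_Dᵀ Ψ_D⁻² A_D)⁻¹ A_Dᵀ Ψ_D⁻² Z_D` satisfy
`w̃_g − W_g = O_p(D^{−1/2})` for every `g ∈ {0,1,…,G}`.
-/

open MeasureTheory ProbabilityTheory Filter Matrix

/-- `X_n = O_p(a_n)`. -/
def IsBigOp {Om : Type*} [MeasurableSpace Om] (μ : Measure Om)
    (X : ℕ → Om → ℝ) (a : ℕ → ℝ) : Prop :=
  ∀ ε : ℝ, 0 < ε → ∃ M : ℝ, 0 < M ∧
    ∀ᶠ n in atTop, μ {ω | M * a n < |X n ω|} < ENNReal.ofReal ε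

section
open Real

namespace BifactorAux

lemma integrable_sq_gauss : Integrable (fun x : ℝ => x ^ 2) (gaussianReal 0 1) := by
  rw [gaussianReal_of_var_ne_zero 0 one_ne_zero,
    integrable_withDensity_iff (measurable_gaussianPDF 0 1)
      (ae_of_all _ fun x => ENNReal.ofReal_lt_top)]
  have h : ∀ x : ℝ, (gaussianPDF 0 1 x).toReal = gaussianPDFReal 0 1 x :=
    fun x => ENNReal.toReal_ofReal (gaussianPDFReal_nonneg _ _ _)
  have h2 := (integrable_rpow_mul_exp_neg_mul_sq (b := (2:ℝ)⁻¹) (by norm_num)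
      (s := 2) (by norm_num)).const_mul (√(2 * π * 1))⁻¹
  simp only [Real.rpow_two] at h2
  refine h2.congr (ae_of_all _ fun x => ?_)
  show (√(2 * π * 1))⁻¹ * (x ^ 2 * rexp (-2⁻¹ * x ^ 2)) = x ^ 2 * (gaussianPDF 0 1 x).toReal
  rw [h, gaussianPDFReal]
  push_cast
  have e : -(x - 0) ^ 2 / (2 * 1) = -2⁻¹ * x ^ 2 := by ring
  rw [e]
  ring

lemma memℒp_two_gauss : MemLp (id : ℝ → ℝ) 2 (gaussianReal 0 1) := by
  rw [memLp_two_iff_integrable_sq aestronglyMeasurable_id]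
  exact integrable_sq_gauss.congr (ae_of_all _ fun x => by simp [sq])

lemma integral_id_gauss : ∫ x, x ∂(gaussianReal 0 1) = 0 := by
  have hmap : (gaussianReal 0 1).map (fun x => (-1 : ℝ) * x) = gaussianReal 0 1 := by
    rw [gaussianReal_map_const_mul (-1)]
    norm_num
  have h1 := integral_map (μ := gaussianReal 0 1) (φ := fun x => (-1:ℝ) * x)
    (f := fun x => x) (by fun_prop) measurable_id.aestronglyMeasurable
  rw [hmap] at h1
  simp only [neg_one_mul] at h1
  have h2 : ∫ x : ℝ, -x ∂(gaussianReal 0 1) = - ∫ x : ℝ, x ∂(gaussianReal 0 1) :=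
    integral_neg fun x => x
  linarith

end BifactorAux

namespace BifactorAux

variable {Om : Type*} [MeasurableSpace Om] {μ : Measure Om} [IsProbabilityMeasure μ]

/-- the second moment of a standard gaussian -/
noncomputable def κ : ℝ := ∫ x, x ^ 2 ∂(gaussianReal 0 1)

lemma κ_nonneg : 0 ≤ κ := integral_nonneg fun x => sq_nonneg x

lemma memℒp_two_of_law {ξ : Om → ℝ} (hm : Measurable ξ)
    (hl : μ.map ξ = gaussianReal 0 1) : MemLp ξ 2 μ := by
  have := (memLp_map_measure_iff (g := (id : ℝ → ℝ)) (f := ξ)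
    aestronglyMeasurable_id hm.aemeasurable).mp (by rw [hl]; exact memℒp_two_gauss)
  simpa [Function.comp] using this

lemma integral_of_law {ξ : Om → ℝ} (hm : Measurable ξ)
    (hl : μ.map ξ = gaussianReal 0 1) : ∫ ω, ξ ω ∂μ = 0 := by
  have h := integral_map (μ := μ) (φ := ξ) (f := fun x : ℝ => x) hm.aemeasurable
    measurable_id.aestronglyMeasurable
  rw [hl, integral_id_gauss] at h
  exact h.symm

lemma integral_sq_of_law {ξ : Om → ℝ} (hm : Measurable ξ)
    (hl : μ.map ξ = gaussianReal 0 1) : ∫ ω, ξ ω ^ 2 ∂μ = κ := by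
  have h := integral_map (μ := μ) (φ := ξ) (f := fun x : ℝ => x ^ 2) hm.aemeasurable
    (by fun_prop)
  rw [hl] at h
  exact h.symm

lemma variance_of_law {ξ : Om → ℝ} (hm : Measurable ξ)
    (hl : μ.map ξ = gaussianReal 0 1) : variance ξ μ = κ := by
  rw [variance_eq_sub (memℒp_two_of_law hm hl)]
  have h1 : μ[ξ ^ 2] = κ := by
    simpa [Pi.pow_apply] using integral_sq_of_law hm hl
  rw [h1, integral_of_law hm hl]
  ring

lemma combo {ι : Type*} (ξ : ι → Om → ℝ) (hm : ∀ i, Measurable (ξ i))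
    (hindep : iIndepFun ξ μ)
    (hlaw : ∀ i, μ.map (ξ i) = gaussianReal 0 1)
    (s : Finset ι) (b : ι → ℝ) :
    MemLp (fun ω => ∑ u ∈ s, b u * ξ u ω) 2 μ ∧
    (∫ ω, (∑ u ∈ s, b u * ξ u ω) ∂μ) = 0 ∧
    variance (fun ω => ∑ u ∈ s, b u * ξ u ω) μ = κ * ∑ u ∈ s, (b u) ^ 2 := by
  have hℒp : ∀ u : ι, MemLp (fun ω => b u * ξ u ω) 2 μ := fun u =>
    (memℒp_two_of_law (hm u) (hlaw u)).const_mul (b u)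
  have hXeq : (fun ω => ∑ u ∈ s, b u * ξ u ω) = ∑ u ∈ s, (fun ω => b u * ξ u ω) := by
    funext ω
    rw [Finset.sum_apply]
  have hXℒp : MemLp (fun ω => ∑ u ∈ s, b u * ξ u ω) 2 μ := by
    rw [hXeq]; exact memLp_finset_sum' s fun u _ => hℒp u
  refine ⟨hXℒp, ?_, ?_⟩
  · rw [integral_finset_sum s fun u _ => (hℒp u).integrable one_le_two]
    refine Finset.sum_eq_zero fun u _ => ?_
    rw [integral_const_mul, integral_of_law (hm u) (hlaw u), mul_zero]
  · rw [hXeq, IndepFun.variance_sum (fun u _ => hℒp u) ?_, Finset.mul_sum]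
    · refine Finset.sum_congr rfl fun u _ => ?_
      have : (fun ω => b u * ξ u ω) = b u • ξ u := by funext ω; simp
      rw [this, variance_smul, variance_of_law (hm u) (hlaw u)]
      ring
    · intro u hu w hw huw
      exact (hindep.indepFun huw).comp (measurable_const_mul (b u))
        (measurable_const_mul (b w))

end BifactorAux


end

open BifactorAux

set_option maxHeartbeats 2000000 in
theorem bifactor_factor_score_consistency
    {Om : Type*} [MeasurableSpace Om] (μ : Measure Om) [IsProbabilityMeasure μ]
    {G : ℕ} (hG : 0 < G)
    -- latent variables `Wfull 0 = W₀`, `Wfull g.succ = W_g`, and disturbances `ε g j`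
    (Wfull : Fin (G + 1) → Om → ℝ) (ε : Fin G → ℕ → Om → ℝ)
    (hWmeas : ∀ h, Measurable (Wfull h)) (hεmeas : ∀ g j, Measurable (ε g j))
    -- mutual independence of `(W₀, W₁, …, W_G, (ε_{jg}))`, each `N(0,1)`
    (hindep : iIndepFun
      (Sum.elim Wfull (fun p : Fin G × ℕ => ε p.1 p.2)) μ)
    (hlaw : ∀ i : Fin (G + 1) ⊕ (Fin G × ℕ),
      μ.map (Sum.elim Wfull (fun p : Fin G × ℕ => ε p.1 p.2) i) = gaussianReal 0 1)
    -- loadings, uniformly bounded away from `±1`, with `ψ²` bounded away from `0`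
    (α0 α : Fin G → ℕ → ℝ)
    (hbdd : ∃ δ > (0:ℝ), ∀ g j, |α0 g j| ≤ 1 - δ ∧ |α g j| ≤ 1 - δ)
    (ψ : Fin G → ℕ → ℝ) (hψ : ∀ g j, ψ g j = Real.sqrt (1 - α0 g j ^ 2 - α g j ^ 2))
    (hψδ : ∃ δ > (0:ℝ), ∀ g j, δ ≤ 1 - α0 g j ^ 2 - α g j ^ 2)
    (Z : Fin G → ℕ → Om → ℝ)
    (hZ : ∀ g j ω,
      Z g j ω = α0 g j * Wfull 0 ω + α g j * Wfull g.succ ω + ψ g j * ε g j ω)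
    -- group sizes, all tending to infinity, none dominating
    (d : ℕ → Fin G → ℕ) (hd : ∀ g, Tendsto (fun n => d n g) atTop atTop)
    (Dtot : ℕ → ℕ) (hD : ∀ n, Dtot n = ∑ g, d n g)
    (hnodom : ∃ c > (0:ℝ), ∀ᶠ n in atTop, ∀ g, c * (Dtot n : ℝ) ≤ (d n g : ℝ))
    -- structured loading matrices `A_D = [a₀, diag(a₁,…,a_G)]`
    (A : (n : ℕ) → Matrix ((g : Fin G) × Fin (d n g)) (Fin (G + 1)) ℝ)
    (hA0 : ∀ n (i : (g : Fin G) × Fin (d n g)), A n i 0 = α0 i.1 i.2)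
    (hAloc : ∀ n (i : (g : Fin G) × Fin (d n g)) (h : Fin G),
      A n i h.succ = if h = i.1 then α i.1 i.2 else 0)
    -- full column rank with bounded condition numbers
    (hrank : ∀ n, (A n).rank = G + 1)
    -- `d_g⁻¹ ‖a_j‖₁` does not tend to `0` for `j ∈ {0,1,…,G}`
    (hl1glob : ¬ Tendsto
      (fun n => (Dtot n : ℝ)⁻¹ * ∑ g, ∑ j ∈ Finset.range (d n g), |α0 g j|)
      atTop (nhds 0))
    (hl1loc : ∀ g, ¬ Tendsto
      (fun n => (d n g : ℝ)⁻¹ * ∑ j ∈ Finset.range (d n g), |α g j|)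
      atTop (nhds 0))
    -- `D⁻¹ A_Dᵀ Ψ_D⁻² A_D → Q` with `Q` symmetric positive definite
    (Qm : ℕ → Matrix (Fin (G + 1)) (Fin (G + 1)) ℝ)
    (hQ : ∀ n, Qm n = (A n).transpose *
      (Matrix.diagonal fun i : (g : Fin G) × Fin (d n g) => (ψ i.1 i.2) ^ 2)⁻¹ * A n)
    (Qlim : Matrix (Fin (G + 1)) (Fin (G + 1)) ℝ) (hQpd : Qlim.PosDef)
    (hQconv : Tendsto (fun n => ((Dtot n : ℝ))⁻¹ • Qm n) atTop (nhds Qlim))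
    -- regression factor scores `w̃ = (I + AᵀΨ⁻²A)⁻¹ AᵀΨ⁻² Z`
    (wt : ℕ → Om → Fin (G + 1) → ℝ)
    (hwt : ∀ n ω, wt n ω =
      ((1 + Qm n)⁻¹ * (A n).transpose *
        (Matrix.diagonal fun i : (g : Fin G) × Fin (d n g) => (ψ i.1 i.2) ^ 2)⁻¹).mulVec
        (fun i : (g : Fin G) × Fin (d n g) => Z i.1 i.2 ω)) :
    ∀ h : Fin (G + 1), IsBigOp μ (fun n ω => wt n ω h - Wfull h ω)
      (fun n => (Dtot n : ℝ) ^ (-(1 / 2 : ℝ))) := by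
  classical
  intro h εp hεp
  -- basic facts about ψ
  obtain ⟨δ, hδpos, hδ⟩ := hψδ
  have ψpos : ∀ g j, 0 < ψ g j := fun g j => by
    rw [hψ]; exact Real.sqrt_pos.mpr (lt_of_lt_of_le hδpos (hδ g j))
  have ψne : ∀ g j, ψ g j ≠ 0 := fun g j => (ψpos g j).ne'
  -- D tends to infinity
  have hDnat : Tendsto (fun n => Dtot n) atTop atTop := by
    refine tendsto_atTop_mono (fun n => ?_) (hd ⟨0, hG⟩)
    rw [hD n]
    exact Finset.single_le_sum (fun _ _ => Nat.zero_le _) (Finset.mem_univ _)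
  have hDr : Tendsto (fun n => (Dtot n : ℝ)) atTop atTop :=
    tendsto_natCast_atTop_atTop.comp hDnat
  have hinv0 : Tendsto (fun n => ((Dtot n : ℝ))⁻¹) atTop (nhds 0) :=
    hDr.inv_tendsto_atTop
  -- convergence of the normalized matrices
  have hf : Tendsto (fun n => ((Dtot n : ℝ))⁻¹ • (1 + Qm n)) atTop (nhds Qlim) := by
    have heq : (fun n => ((Dtot n : ℝ))⁻¹ • (1 + Qm n))
        = fun n => ((Dtot n : ℝ))⁻¹ • (1 : Matrix (Fin (G+1)) (Fin (G+1)) ℝ)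
          + ((Dtot n : ℝ))⁻¹ • Qm n := funext fun n => smul_add _ _ _
    rw [heq]
    have h1 : Tendsto (fun n => ((Dtot n : ℝ))⁻¹ • (1 : Matrix (Fin (G+1)) (Fin (G+1)) ℝ))
        atTop (nhds 0) := by
      simpa using hinv0.smul_const (1 : Matrix (Fin (G+1)) (Fin (G+1)) ℝ)
    simpa using h1.add hQconv
  have hdetne : Qlim.det ≠ 0 := hQpd.det_pos.ne'
  have hdet : Tendsto (fun n => (((Dtot n : ℝ))⁻¹ • (1 + Qm n)).det) atTop (nhds Qlim.det) :=
    ((continuous_id.matrix_det).tendsto Qlim).comp hf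
  have hadj : Tendsto (fun n => (((Dtot n : ℝ))⁻¹ • (1 + Qm n)).adjugate h h)
      atTop (nhds (Qlim.adjugate h h)) :=
    by
    have hc : Continuous fun B : Matrix (Fin (G+1)) (Fin (G+1)) ℝ => B h h :=
      (continuous_apply h).comp (continuous_apply h)
    exact (hc.tendsto Qlim.adjugate).comp (((continuous_id.matrix_adjugate).tendsto Qlim).comp hf)
  have hentry : Tendsto (fun n => (((Dtot n : ℝ))⁻¹ • (1 + Qm n))⁻¹ h h)
      atTop (nhds (Qlim⁻¹ h h)) := by
    have hcomp : Tendsto (fun n =>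
        (((Dtot n : ℝ))⁻¹ • (1 + Qm n)).det⁻¹ * (((Dtot n : ℝ))⁻¹ • (1 + Qm n)).adjugate h h)
        atTop (nhds (Qlim.det⁻¹ * Qlim.adjugate h h)) := (hdet.inv₀ hdetne).mul hadj
    have hrw : ∀ (B : Matrix (Fin (G+1)) (Fin (G+1)) ℝ), B⁻¹ h h = B.det⁻¹ * B.adjugate h h := by
      intro B
      rw [Matrix.inv_def, Matrix.smul_apply, smul_eq_mul, Ring.inverse_eq_inv]
    simp_rw [hrw]
    exact hcomp
  set C : ℝ := |Qlim⁻¹ h h| + 1 with hC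
  have hCpos : 0 < C := by positivity
  -- choose M
  set M : ℝ := Real.sqrt (κ * C / εp) + 1 with hM
  have hs0 : 0 ≤ κ * C / εp := by
    have := κ_nonneg
    positivity
  have hMpos : 0 < M := by positivity
  have hMbig : κ * C / M ^ 2 < εp := by
    have hsq : Real.sqrt (κ * C / εp) ^ 2 = κ * C / εp := Real.sq_sqrt hs0
    have hsnn : 0 ≤ Real.sqrt (κ * C / εp) := Real.sqrt_nonneg _
    rw [div_lt_iff₀ (by positivity), hM]
    have key : εp * (Real.sqrt (κ * C / εp)) ^ 2 = κ * C := by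
      rw [hsq]; field_simp
    nlinarith [key, hsnn, hεp, mul_nonneg hεp.le hsnn]
  refine ⟨M, hMpos, ?_⟩
  -- the eventual facts
  have E1 : ∀ᶠ n in atTop, 0 < Dtot n := hDnat.eventually_gt_atTop 0
  have E2 : ∀ᶠ n in atTop, (((Dtot n : ℝ))⁻¹ • (1 + Qm n)).det ≠ 0 :=
    hdet.eventually_ne hdetne
  have E3 : ∀ᶠ n in atTop, (((Dtot n : ℝ))⁻¹ • (1 + Qm n))⁻¹ h h < C :=
    hentry.eventually_lt_const (by rw [hC]; nlinarith [le_abs_self (Qlim⁻¹ h h)])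
  filter_upwards [E1, E2, E3] with n hD0 hfdet hfC
  set S := 1 + Qm n with hSdef
  have hDrn : (0:ℝ) < (Dtot n : ℝ) := by exact_mod_cast hD0
  have hSdet : IsUnit S.det := by
    refine isUnit_iff_ne_zero.mpr fun hz => hfdet ?_
    rw [Matrix.det_smul, hz, mul_zero]
  have hfinv : ((Dtot n : ℝ)⁻¹ • S)⁻¹ = (Dtot n : ℝ) • S⁻¹ := by
    haveI : Invertible ((Dtot n : ℝ)⁻¹) := invertibleOfNonzero (inv_ne_zero hDrn.ne')
    have e := Matrix.inv_smul ((Dtot n : ℝ)⁻¹) (A := S) hSdet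
    rw [e, invOf_eq_inv, inv_inv]
  have hSbound : (Dtot n : ℝ) * S⁻¹ h h ≤ C := by
    have e : ((Dtot n : ℝ)⁻¹ • S)⁻¹ h h = (Dtot n : ℝ) * S⁻¹ h h := by
      rw [hfinv, Matrix.smul_apply, smul_eq_mul]
    rw [e] at hfC
    exact hfC.le
  have hSS : S⁻¹ * S = 1 := Matrix.nonsing_inv_mul S hSdet
  -- coefficient functions
  set v : Fin (G+1) → ℝ := fun k => S⁻¹ h k with hv
  set cc : ((g : Fin G) × Fin (d n g)) → ℝ :=
    fun i => (∑ k, v k * A n i k) * (ψ i.1 i.2)⁻¹ with hcc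
  set N := Finset.univ.sup (d n) with hNdef
  set bco : (Fin (G+1) ⊕ (Fin G × ℕ)) → ℝ :=
    Sum.elim (fun k => -v k)
      (fun p => if hj : p.2 < d n p.1 then cc ⟨p.1, ⟨p.2, hj⟩⟩ else 0) with hbco
  set sfin : Finset (Fin (G+1) ⊕ (Fin G × ℕ)) :=
    Finset.univ.disjSum (Finset.univ ×ˢ Finset.range N) with hsdef
  -- diagonal inverse
  have hdiaginv : (Matrix.diagonal fun i : (g : Fin G) × Fin (d n g) => ψ i.1 i.2 ^ 2)⁻¹
      = Matrix.diagonal fun i : (g : Fin G) × Fin (d n g) => (ψ i.1 i.2 ^ 2)⁻¹ := by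
    refine Matrix.inv_eq_right_inv ?_
    rw [Matrix.diagonal_mul_diagonal]
    have : (fun i : (g : Fin G) × Fin (d n g) => ψ i.1 i.2 ^ 2 * (ψ i.1 i.2 ^ 2)⁻¹)
        = fun _ => (1:ℝ) :=
      funext fun i => mul_inv_cancel₀ (pow_ne_zero 2 (ψne _ _))
    rw [this, Matrix.diagonal_one]
  -- entries of the matrix in front of Z
  have hB : ∀ i : (g : Fin G) × Fin (d n g),
      (S⁻¹ * (A n)ᵀ *
        (Matrix.diagonal fun i : (g : Fin G) × Fin (d n g) => ψ i.1 i.2 ^ 2)⁻¹) h i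
      = (∑ k, v k * A n i k) * (ψ i.1 i.2 ^ 2)⁻¹ := by
    intro i
    rw [hdiaginv, Matrix.mul_diagonal]
    rfl
  have hSQ : S⁻¹ * Qm n = 1 - S⁻¹ := by
    have hQS : Qm n = S - 1 := by rw [hSdef, add_sub_cancel_left]
    rw [hQS, Matrix.mul_sub, hSS, Matrix.mul_one]
  have hBA : ∀ k, (∑ i : (g : Fin G) × Fin (d n g),
      ((∑ k', v k' * A n i k') * (ψ i.1 i.2 ^ 2)⁻¹) * A n i k)
      = (1 : Matrix (Fin (G+1)) (Fin (G+1)) ℝ) h k - S⁻¹ h k := by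
    intro k
    have e1 : (S⁻¹ * Qm n) h k = ∑ i : (g : Fin G) × Fin (d n g),
        ((∑ k', v k' * A n i k') * (ψ i.1 i.2 ^ 2)⁻¹) * A n i k := by
      rw [hQ n, ← Matrix.mul_assoc, ← Matrix.mul_assoc, Matrix.mul_apply]
      exact Finset.sum_congr rfl fun i _ => by rw [hB i]
    rw [← e1, hSQ, Matrix.sub_apply]
  -- row sums of A against the latent variables
  have hrow : ∀ (i : (g : Fin G) × Fin (d n g)) (ω : Om),
      α0 i.1 i.2 * Wfull 0 ω + α i.1 i.2 * Wfull i.1.succ ω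
        = ∑ k, A n i k * Wfull k ω := by
    intro i ω
    rw [Fin.sum_univ_succ, hA0]
    congr 1
    simp only [hAloc, ite_mul, zero_mul]
    rw [Finset.sum_ite_eq' Finset.univ i.1 (fun g' => α i.1 i.2 * Wfull g'.succ ω)]
    simp
  -- padded sums over the disturbance indices
  have hpad : ∀ F : Fin G × ℕ → ℝ,
      (∑ p ∈ Finset.univ ×ˢ Finset.range N,
        (if hj : p.2 < d n p.1 then cc ⟨p.1, ⟨p.2, hj⟩⟩ else 0) * F p)
      = ∑ i : (g : Fin G) × Fin (d n g), cc i * F (i.1, (i.2 : ℕ)) := by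
    intro F
    rw [Finset.sum_product]
    conv_rhs => rw [← Finset.univ_sigma_univ, Finset.sum_sigma]
    refine Finset.sum_congr rfl fun g _ => ?_
    have hsub : Finset.range (d n g) ⊆ Finset.range N :=
      Finset.range_subset_range.mpr (Finset.le_sup (Finset.mem_univ g))
    calc ∑ j ∈ Finset.range N,
          (if hj : j < d n g then cc ⟨g, ⟨j, hj⟩⟩ else 0) * F (g, j)
        = ∑ j ∈ Finset.range (d n g),
          (if hj : j < d n g then cc ⟨g, ⟨j, hj⟩⟩ else 0) * F (g, j) :=
          (Finset.sum_subset hsub fun j _ hj => by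
            rw [dif_neg (by simpa using hj), zero_mul]).symm
      _ = ∑ j : Fin (d n g), cc ⟨g, j⟩ * F (g, (j : ℕ)) := by
          rw [← Fin.sum_univ_eq_sum_range
            (fun j => (if hj : j < d n g then cc ⟨g, ⟨j, hj⟩⟩ else 0) * F (g, j)) (d n g)]
          exact Finset.sum_congr rfl fun j _ => by rw [dif_pos j.isLt]
  -- key representation of the factor score error as a linear combination
  have key : ∀ ω : Om, wt n ω h - Wfull h ω
      = ∑ u ∈ sfin, bco u * (Sum.elim Wfull (fun p : Fin G × ℕ => ε p.1 p.2)) u ω := by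
    intro ω
    have hRHS : (∑ u ∈ sfin, bco u * (Sum.elim Wfull (fun p : Fin G × ℕ => ε p.1 p.2)) u ω)
        = (∑ k, -v k * Wfull k ω)
          + ∑ i : (g : Fin G) × Fin (d n g), cc i * ε i.1 i.2 ω := by
      rw [hsdef, Finset.sum_disjSum]
      congr 1
      exact hpad (fun p => ε p.1 p.2 ω)
    rw [hRHS]
    have hL : wt n ω h = ∑ i : (g : Fin G) × Fin (d n g),
        ((∑ k', v k' * A n i k') * (ψ i.1 i.2 ^ 2)⁻¹) * Z i.1 i.2 ω := by
      have e := congrFun (hwt n ω) h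
      rw [e]
      simp only [Matrix.mulVec, dotProduct]
      exact Finset.sum_congr rfl fun i _ => congrArg (fun x => x * Z i.1 i.2 ω) (hB i)
    have hsplit : wt n ω h = (∑ i : (g : Fin G) × Fin (d n g),
          ((∑ k', v k' * A n i k') * (ψ i.1 i.2 ^ 2)⁻¹) * (∑ k, A n i k * Wfull k ω))
        + ∑ i : (g : Fin G) × Fin (d n g), cc i * ε i.1 i.2 ω := by
      rw [hL, ← Finset.sum_add_distrib]
      refine Finset.sum_congr rfl fun i _ => ?_
      rw [hZ i.1 i.2 ω, ← hrow i ω]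
      have hψi := ψne i.1 i.2
      rw [hcc]
      field_simp
    have hswap : (∑ i : (g : Fin G) × Fin (d n g),
          ((∑ k', v k' * A n i k') * (ψ i.1 i.2 ^ 2)⁻¹) * (∑ k, A n i k * Wfull k ω))
        = ∑ k, ((1 : Matrix (Fin (G+1)) (Fin (G+1)) ℝ) h k - S⁻¹ h k) * Wfull k ω := by
      simp_rw [Finset.mul_sum]
      rw [Finset.sum_comm]
      refine Finset.sum_congr rfl fun k _ => ?_
      rw [← hBA k, Finset.sum_mul]
      exact Finset.sum_congr rfl fun i _ => by ring
    have hone : (∑ k, (1 : Matrix (Fin (G+1)) (Fin (G+1)) ℝ) h k * Wfull k ω)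
        = Wfull h ω := by
      simp only [Matrix.one_apply, ite_mul, one_mul, zero_mul]
      rw [Finset.sum_ite_eq Finset.univ h (fun k => Wfull k ω)]
      simp
    rw [hsplit, hswap]
    simp only [sub_mul, neg_mul]
    rw [Finset.sum_sub_distrib, hone]
    have : ∑ k, -(v k * Wfull k ω) = -∑ k, v k * Wfull k ω := by
      rw [Finset.sum_neg_distrib]
    ring_nf
    rw [this]
    ring
  -- sum of squared coefficients
  have hvar2 : ∑ u ∈ sfin, bco u ^ 2 = S⁻¹ h h := by
    rw [hsdef, Finset.sum_disjSum]
    have h1 : ∑ k, bco (Sum.inl k) ^ 2 = ∑ k, v k ^ 2 := by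
      simp [hbco]
    have h2 : ∑ p ∈ Finset.univ ×ˢ Finset.range N, bco (Sum.inr p) ^ 2
        = ∑ i : (g : Fin G) × Fin (d n g), cc i ^ 2 := by
      have e : ∀ p : Fin G × ℕ, bco (Sum.inr p) ^ 2
          = (if hj : p.2 < d n p.1 then cc ⟨p.1, ⟨p.2, hj⟩⟩ else 0) * bco (Sum.inr p) := by
        intro p
        rw [hbco]
        by_cases hj : p.2 < d n p.1
        · simp [hj, sq]
        · simp [hj]
      calc ∑ p ∈ Finset.univ ×ˢ Finset.range N, bco (Sum.inr p) ^ 2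
          = ∑ p ∈ Finset.univ ×ˢ Finset.range N,
            (if hj : p.2 < d n p.1 then cc ⟨p.1, ⟨p.2, hj⟩⟩ else 0) * bco (Sum.inr p) :=
            Finset.sum_congr rfl fun p _ => e p
        _ = ∑ i : (g : Fin G) × Fin (d n g), cc i * bco (Sum.inr (i.1, (i.2 : ℕ))) :=
            hpad (fun p => bco (Sum.inr p))
        _ = ∑ i : (g : Fin G) × Fin (d n g), cc i ^ 2 := by
            refine Finset.sum_congr rfl fun i _ => ?_
            rw [hbco]
            simp only [Sum.elim_inr]
            rw [dif_pos i.2.isLt, sq]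
    rw [h1, h2]
    -- identify Qm entries
    have hQentry : ∀ k l, Qm n k l
        = ∑ i : (g : Fin G) × Fin (d n g), (A n i k * (ψ i.1 i.2 ^ 2)⁻¹) * A n i l := by
      intro k l
      rw [hQ n, Matrix.mul_apply]
      refine Finset.sum_congr rfl fun i _ => ?_
      rw [hdiaginv, Matrix.mul_diagonal, Matrix.transpose_apply]
    have hcsq : ∑ i : (g : Fin G) × Fin (d n g), cc i ^ 2
        = ∑ k, ∑ l, v k * v l * Qm n k l := by
      have e1 : ∀ i : (g : Fin G) × Fin (d n g), cc i ^ 2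
          = ∑ k, ∑ l, v k * v l * ((A n i k * (ψ i.1 i.2 ^ 2)⁻¹) * A n i l) := by
        intro i
        rw [hcc, mul_pow, inv_pow, sq (∑ k, v k * A n i k), Finset.sum_mul_sum,
          Finset.sum_mul]
        refine Finset.sum_congr rfl fun k _ => ?_
        rw [Finset.sum_mul]
        exact Finset.sum_congr rfl fun l _ => by ring
      calc ∑ i : (g : Fin G) × Fin (d n g), cc i ^ 2
          = ∑ i : (g : Fin G) × Fin (d n g),
            ∑ k, ∑ l, v k * v l * ((A n i k * (ψ i.1 i.2 ^ 2)⁻¹) * A n i l) :=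
            Finset.sum_congr rfl fun i _ => e1 i
        _ = ∑ k, ∑ i : (g : Fin G) × Fin (d n g),
            ∑ l, v k * v l * ((A n i k * (ψ i.1 i.2 ^ 2)⁻¹) * A n i l) :=
            Finset.sum_comm
        _ = ∑ k, ∑ l, ∑ i : (g : Fin G) × Fin (d n g),
            v k * v l * ((A n i k * (ψ i.1 i.2 ^ 2)⁻¹) * A n i l) :=
            Finset.sum_congr rfl fun k _ => Finset.sum_comm
        _ = ∑ k, ∑ l, v k * v l * Qm n k l := by
            refine Finset.sum_congr rfl fun k _ => Finset.sum_congr rfl fun l _ => ?_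
            rw [hQentry k l, Finset.mul_sum]
    rw [hcsq]
    have h1k : ∀ k, v k ^ 2 = ∑ l, v k * v l * (1 : Matrix (Fin (G+1)) (Fin (G+1)) ℝ) k l := by
      intro k
      simp [Matrix.one_apply, mul_ite, mul_one, mul_zero, Finset.sum_ite_eq, sq]
    calc (∑ k, v k ^ 2) + ∑ k, ∑ l, v k * v l * Qm n k l
        = ∑ k, ∑ l, v k * v l * S k l := by
          rw [← Finset.sum_add_distrib]
          refine Finset.sum_congr rfl fun k _ => ?_
          rw [h1k k, ← Finset.sum_add_distrib]
          refine Finset.sum_congr rfl fun l _ => ?_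
          rw [hSdef, Matrix.add_apply]
          ring
      _ = ∑ l, (∑ k, v k * S k l) * v l := by
          rw [Finset.sum_comm]
          refine Finset.sum_congr rfl fun l _ => ?_
          rw [Finset.sum_mul]
          exact Finset.sum_congr rfl fun k _ => by ring
      _ = ∑ l, (1 : Matrix (Fin (G+1)) (Fin (G+1)) ℝ) h l * v l := by
          refine Finset.sum_congr rfl fun l _ => ?_
          have e : (S⁻¹ * S) h l = ∑ k, v k * S k l := Matrix.mul_apply
          rw [← e, hSS]
      _ = v h := by simp [Matrix.one_apply, ite_mul, Finset.sum_ite_eq]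
      _ = S⁻¹ h h := rfl
  -- probabilistic conclusion via Chebyshev
  have hmeasξ : ∀ i : Fin (G + 1) ⊕ (Fin G × ℕ),
      Measurable ((Sum.elim Wfull (fun p : Fin G × ℕ => ε p.1 p.2)) i) := by
    rintro (k | p)
    · exact hWmeas k
    · exact hεmeas p.1 p.2
  obtain ⟨hXp, hXint, hXvar⟩ := combo (μ := μ)
    (Sum.elim Wfull (fun p : Fin G × ℕ => ε p.1 p.2)) hmeasξ hindep hlaw sfin bco
  have hXvar' : variance (fun ω => ∑ u ∈ sfin,
      bco u * (Sum.elim Wfull (fun p : Fin G × ℕ => ε p.1 p.2)) u ω) μ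
      = κ * (S⁻¹ h h) := by rw [hXvar, hvar2]
  have hShh_nonneg : 0 ≤ S⁻¹ h h := by
    rw [← hvar2]; exact Finset.sum_nonneg fun u _ => sq_nonneg _
  have han : (0:ℝ) < (Dtot n : ℝ) ^ (-(1/2:ℝ)) := Real.rpow_pos_of_pos hDrn _
  have hcpos : (0:ℝ) < M * (Dtot n : ℝ) ^ (-(1/2:ℝ)) := mul_pos hMpos han
  have cheb := meas_ge_le_variance_div_sq (μ := μ) hXp hcpos
  have hsq_an : ((Dtot n : ℝ) ^ (-(1/2:ℝ))) ^ 2 = (Dtot n : ℝ)⁻¹ := by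
    rw [← Real.rpow_natCast ((Dtot n : ℝ) ^ (-(1/2:ℝ))) 2, ← Real.rpow_mul hDrn.le]
    rw [show (-(1/2:ℝ)) * ((2:ℕ):ℝ) = -1 by push_cast; norm_num, Real.rpow_neg_one]
  have hbound : variance (fun ω => ∑ u ∈ sfin,
      bco u * (Sum.elim Wfull (fun p : Fin G × ℕ => ε p.1 p.2)) u ω) μ
      / (M * (Dtot n : ℝ) ^ (-(1/2:ℝ))) ^ 2 ≤ κ * C / M ^ 2 := by
    rw [hXvar', mul_pow, hsq_an]
    have hle : S⁻¹ h h ≤ C / (Dtot n : ℝ) := (le_div_iff₀' hDrn).mpr hSbound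
    have hκ := κ_nonneg
    rw [div_le_div_iff₀ (by positivity) (by positivity)]
    have h2 := mul_le_mul_of_nonneg_left hle (mul_nonneg hκ (sq_nonneg M))
    have h3 : κ * M ^ 2 * (C / (Dtot n : ℝ)) = κ * C * (M ^ 2 * (Dtot n : ℝ)⁻¹) := by
      field_simp
    nlinarith [h2, h3]
  calc μ {ω | M * (Dtot n : ℝ) ^ (-(1/2:ℝ)) < |wt n ω h - Wfull h ω|}
      ≤ μ {ω | M * (Dtot n : ℝ) ^ (-(1/2:ℝ)) ≤
          |(∑ u ∈ sfin, bco u * (Sum.elim Wfull (fun p : Fin G × ℕ => ε p.1 p.2)) u ω)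
            - μ[fun ω => ∑ u ∈ sfin,
                bco u * (Sum.elim Wfull (fun p : Fin G × ℕ => ε p.1 p.2)) u ω]|} := by
        refine measure_mono fun ω hω => ?_
        rw [Set.mem_setOf_eq] at hω ⊢
        rw [hXint, sub_zero, ← key ω]
        exact hω.le
    _ ≤ ENNReal.ofReal (variance (fun ω => ∑ u ∈ sfin,
          bco u * (Sum.elim Wfull (fun p : Fin G × ℕ => ε p.1 p.2)) u ω) μ
          / (M * (Dtot n : ℝ) ^ (-(1/2:ℝ))) ^ 2) := cheb
    _ ≤ ENNReal.ofReal (κ * C / M ^ 2) := ENNReal.ofReal_le_ofReal hbound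
    _ < ENNReal.ofReal εp := (ENNReal.ofReal_lt_ofReal_iff hεp).2 hMbig
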